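/- arXiv:1710.07507 — 2 statements merged into one kernel-verified Lean document; each statement's English description precedes it below -/
import Mathlib

section
/- Let G be a modular graph with at least three vertices. Then SW_3(G) = ((|V(G)|−2)/2)·W(G). -/
/-!
If `z` is a median of `u, v, w`, the union of geodesics from `z` to the three vertices is a
connected subgraph with at most `d(z,u) + d(z,v) + d(z,w) = (d(u,v) + d(u,w) + d(v,w)) / 2`
edges. Conversely every connected subgraph containing `u, v, w` has at least that many edges, since it
contains a geodesic from `v` to `w` and an edge-disjoint path from `u` to it. Hence
`4 d(S) = ∑_{x ≠ y ∈ S} d(x, y)` for every triple `S`, and summing over all triples counts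
each ordered pair of distinct vertices `|V| - 2` times.
-/

open Finset SimpleGraph Polynomial

/-- The Steiner distance of a vertex set `S`: the minimum number of edges of a
connected subgraph of `G` whose vertex set contains `S`. -/
noncomputable def steinerDist {V : Type*} (G : SimpleGraph V) (S : Set V) : ℕ :=
  sInf {n | ∃ H : G.Subgraph, H.Connected ∧ S ⊆ H.verts ∧ H.edgeSet.ncard = n}

/-- The Steiner `k`-Wiener index. -/
noncomputable def SW {V : Type*} [Fintype V] [DecidableEq V] (k : ℕ) (G : SimpleGraph V) : ℕ :=
  ∑ S ∈ Finset.powersetCard k (Finset.univ : Finset V), steinerDist G (S : Set V)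

/-- The Steiner `k`-hyper-Wiener index. -/
noncomputable def SWW {V : Type*} [Fintype V] [DecidableEq V] (k : ℕ) (G : SimpleGraph V) : ℝ :=
  (1/2) * ∑ S ∈ Finset.powersetCard k (Finset.univ : Finset V), (steinerDist G (S : Set V) : ℝ)
    + (1/2) * ∑ S ∈ Finset.powersetCard k (Finset.univ : Finset V), (steinerDist G (S : Set V) : ℝ) ^ 2

/-- The Steiner `k`-Hosoya polynomial `∑_{m ≥ 0} d_k(G,m) x^m`, written as
`∑_{S ⊆ V(G), |S| = k} x^{d(S)}`. -/
noncomputable def SH {V : Type*} [Fintype V] [DecidableEq V] (k : ℕ) (G : SimpleGraph V) :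
    Polynomial ℝ :=
  ∑ S ∈ Finset.powersetCard k (Finset.univ : Finset V), Polynomial.X ^ (steinerDist G (S : Set V))

/-- The Wiener index `W(G) = ∑_{{u,v} ⊆ V(G)} d(u,v)` (each unordered pair counted once). -/
noncomputable def wiener {V : Type*} [Fintype V] [DecidableEq V] (G : SimpleGraph V) : ℝ :=
  (∑ p ∈ Finset.univ.offDiag, (G.dist p.1 p.2 : ℝ)) / 2

/-- `\overline{WW}(G) = ∑_{{u,v} ⊆ V(G)} d(u,v)²`. -/
noncomputable def WWbar {V : Type*} [Fintype V] [DecidableEq V] (G : SimpleGraph V) : ℝ :=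
  (∑ p ∈ Finset.univ.offDiag, (G.dist p.1 p.2 : ℝ) ^ 2) / 2

/-- The set of ordered triples of pairwise distinct vertices. -/
def O3 (V : Type*) [Fintype V] [DecidableEq V] : Finset (V × V × V) :=
  Finset.univ.filter fun t => t.1 ≠ t.2.1 ∧ t.1 ≠ t.2.2 ∧ t.2.1 ≠ t.2.2

/-- `\widehat{WW}(G) = ∑_{(u,v,w) ∈ O₃(G)} d(u,v)·d(u,w)`. -/
noncomputable def WWhat {V : Type*} [Fintype V] [DecidableEq V] (G : SimpleGraph V) : ℝ :=
  ∑ t ∈ O3 V, (G.dist t.1 t.2.1 : ℝ) * (G.dist t.1 t.2.2 : ℝ)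

/-- `z` is a median of the triple `u, v, w`: it lies on a shortest `u,v`-path, a shortest
`u,w`-path and a shortest `v,w`-path. -/
def IsMedian {V : Type*} (G : SimpleGraph V) (u v w z : V) : Prop :=
  G.dist u z + G.dist z v = G.dist u v ∧
  G.dist u z + G.dist z w = G.dist u w ∧
  G.dist v z + G.dist z w = G.dist v w

/-- A modular graph: a connected graph in which every triple of vertices has a median. -/
def IsModular {V : Type*} (G : SimpleGraph V) : Prop :=
  G.Connected ∧ ∀ u v w : V, ∃ z : V, IsMedian G u v w z

/-- The hypercube graph `Q_n` on `Fin n → Bool`: two vertices are adjacent iff they differ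
in exactly one coordinate. -/
def hypercubeGraph (n : ℕ) : SimpleGraph (Fin n → Bool) :=
  SimpleGraph.fromRel fun x y => ∃! i, x i ≠ y i

/-- A partial cube: a connected graph isometrically embeddable into a hypercube. -/
def IsPartialCube {V : Type*} (G : SimpleGraph V) : Prop :=
  G.Connected ∧ ∃ (n : ℕ) (f : V → (Fin n → Bool)),
    ∀ u v : V, (hypercubeGraph n).dist (f u) (f v) = G.dist u v

/-- The Djoković–Winkler relation Θ on (edges viewed as) unordered pairs:
`s(u₁,v₁) Θ s(u₂,v₂)` iff `d(u₁,u₂) + d(v₁,v₂) ≠ d(u₁,v₂) + d(v₁,u₂)`. -/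
def theta {V : Type*} (G : SimpleGraph V) (e f : Sym2 V) : Prop :=
  ∃ u₁ v₁ u₂ v₂ : V, e = s(u₁, v₁) ∧ f = s(u₂, v₂) ∧
    G.dist u₁ u₂ + G.dist v₁ v₂ ≠ G.dist u₁ v₂ + G.dist v₁ u₂

/-- `E` together with the component data `U`, `U'` is the family of Θ-classes of the
partial cube `G`: each `E i` is a Θ-class of edges, the classes are pairwise distinct and
cover the edge set, and `U i`, `U' i` are (the vertex sets of) the two connected components
of `G - E i`. -/
def IsThetaClassSetup {V : Type*} (G : SimpleGraph V) (d : ℕ)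
    (E : Fin d → Set (Sym2 V)) (U U' : Fin d → Set V) : Prop :=
  (∀ i, ∃ e ∈ G.edgeSet, E i = {f | f ∈ G.edgeSet ∧ theta G f e}) ∧
  Function.Injective E ∧
  G.edgeSet = ⋃ i, E i ∧
  ∀ i, ∃ c c' : (G.deleteEdges (E i)).ConnectedComponent, c ≠ c' ∧
    U i = c.supp ∧ U' i = c'.supp ∧
    ∀ b : (G.deleteEdges (E i)).ConnectedComponent, b = c ∨ b = c'

namespace Finset

variable {α M : Type*} [DecidableEq α] [AddCommMonoid M]

lemma sum_offDiag_triple {u v w : α} (huv : u ≠ v) (huw : u ≠ w) (hvw : v ≠ w)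
    (f : α × α → M) :
    ∑ p ∈ ({u, v, w} : Finset α).offDiag, f p
      = f (u, v) + f (u, w) + f (v, u) + f (v, w) + f (w, u) + f (w, v) := by
  have : ({u, v, w} : Finset α).offDiag = {(u, v), (u, w), (v, u), (v, w), (w, u), (w, v)} := by
    ext ⟨a, b⟩
    simp only [mem_offDiag, mem_insert, mem_singleton, Prod.mk.injEq]
    grind
  rw [this, sum_insert, sum_insert, sum_insert, sum_insert, sum_insert, sum_singleton] <;>
    simp [*, Ne.symm, add_assoc]

/-- Each pair of distinct elements of `s` lies in `(#s - 2).choose (k - 2)` of the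
`k`-subsets of `s`. -/
lemma sum_powersetCard_sum_offDiag (s : Finset α) {k : ℕ} (hk : 2 ≤ k) (f : α × α → M) :
    ∑ S ∈ s.powersetCard k, ∑ p ∈ S.offDiag, f p
      = (#s - 2).choose (k - 2) • ∑ p ∈ s.offDiag, f p := by
  rw [sum_comm' (t' := s.offDiag) (s' := fun p => (s.powersetCard k).filter ({p.1, p.2} ⊆ ·)),
    smul_sum]
  · refine sum_congr rfl fun p hp => ?_
    obtain ⟨h1, h2, hne⟩ := mem_offDiag.mp hp
    rw [sum_const, card_filter_powersetCard_subset _ _ _ (insert_subset h1 (by simpa))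
      (by rwa [card_pair hne]), card_pair hne]
  · intro S p
    simp only [mem_powersetCard, mem_offDiag, mem_filter, insert_subset_iff, singleton_subset_iff]
    grind

end Finset

namespace SimpleGraph

variable {V : Type*} {G : SimpleGraph V} {u v w x y z : V}

namespace Walk

lemma dist_add_dist_le_length (p : G.Walk u v) (hx : x ∈ p.support) :
    G.dist u x + G.dist x v ≤ p.length := by
  classical
  conv_rhs => rw [← p.take_spec hx, length_append]
  exact add_le_add (dist_le _) (dist_le _)

lemma ncard_edgeSet_le_length (p : G.Walk u v) : p.edgeSet.ncard ≤ p.length := by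
  classical
  rw [← coe_edges_toFinset, Set.ncard_coe_finset, ← length_edges]
  exact List.toFinset_card_le _

lemma IsTrail.ncard_edgeSet {p : G.Walk u v} (hp : p.IsTrail) : p.edgeSet.ncard = p.length := by
  classical
  rw [← coe_edges_toFinset, Set.ncard_coe_finset, List.toFinset_card_of_nodup hp.edges_nodup,
    length_edges]

lemma disjoint_edgeSet_of_support {p : G.Walk u v} {q : G.Walk x y}
    (h : ∀ a ∈ p.support, a ∈ q.support → a = z) : Disjoint p.edgeSet q.edgeSet := by
  refine Set.disjoint_left.mpr fun e hp hq => ?_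
  induction e using Sym2.ind with
  | h a b =>
    have ha := h a (p.fst_mem_support_of_mem_edges hp) (q.fst_mem_support_of_mem_edges hq)
    have hb := h b (p.snd_mem_support_of_mem_edges hp) (q.snd_mem_support_of_mem_edges hq)
    subst ha hb
    exact G.irrefl (p.adj_of_mem_edges hp)

lemma IsTrail.length_add_length_le [Finite V] {p : G.Walk u v} {q : G.Walk x y}
    (hp : p.IsTrail) (hq : q.IsTrail) (h : Disjoint p.edgeSet q.edgeSet) :
    p.length + q.length ≤ G.edgeSet.ncard := by
  rw [← hp.ncard_edgeSet, ← hq.ncard_edgeSet, ← Set.ncard_union_eq h]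
  exact Set.ncard_le_ncard (Set.union_subset p.edges_subset_edgeSet q.edges_subset_edgeSet)

end Walk

/-- Join `u` to a vertex `z` of a geodesic from `v` to `w` that is closest to `u`: the geodesic
from `u` to `z` meets the first one only in `z`, and the two together witness the bound. -/
lemma Connected.dist_add_dist_add_dist_le [Finite V] (hc : G.Connected) (u v w : V) :
    G.dist u v + G.dist u w + G.dist v w ≤ 2 * G.edgeSet.ncard := by
  classical
  obtain ⟨p, hp, hpl⟩ := hc.exists_path_of_dist v w
  obtain ⟨z, hz, hzmin⟩ := p.support.toFinset.exists_min_image (G.dist u) ⟨v, by simp⟩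
  rw [List.mem_toFinset] at hz
  obtain ⟨q, hq, hql⟩ := hc.exists_path_of_dist u z
  have hmeet : ∀ a ∈ q.support, a ∈ p.support → a = z := by
    intro a haq hap
    have := q.dist_add_dist_le_length haq
    have := hzmin a (List.mem_toFinset.mpr hap)
    exact hc.dist_eq_zero_iff.mp (by omega)
  have hedges :=
    hq.isTrail.length_add_length_le hp.isTrail (Walk.disjoint_edgeSet_of_support hmeet)
  have hzvw := p.dist_add_dist_le_length hz
  rw [dist_comm (u := v) (v := z)] at hzvw
  have := hc.dist_triangle (u := u) (v := z) (w := v)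
  have := hc.dist_triangle (u := u) (v := z) (w := w)
  omega

namespace Subgraph

lemma ncard_edgeSet_coe (H : G.Subgraph) : H.coe.edgeSet.ncard = H.edgeSet.ncard := by
  rw [← image_coe_edgeSet_coe]
  exact (Set.ncard_image_of_injective _ (Sym2.map.injective Subtype.val_injective)).symm

lemma Connected.dist_le_dist_coe {H : G.Subgraph} (hH : H.Connected) (hu : u ∈ H.verts)
    (hv : v ∈ H.verts) : G.dist u v ≤ H.coe.dist ⟨u, hu⟩ ⟨v, hv⟩ := by
  obtain ⟨p, hp⟩ := (hH ⟨u, hu⟩ ⟨v, hv⟩).exists_walk_length_eq_dist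
  calc G.dist u v ≤ (p.map H.hom).length := dist_le _
    _ = H.coe.dist ⟨u, hu⟩ ⟨v, hv⟩ := by rw [Walk.length_map, hp]

lemma Connected.dist_add_dist_add_dist_le [Finite V] {H : G.Subgraph} (hH : H.Connected)
    (hu : u ∈ H.verts) (hv : v ∈ H.verts) (hw : w ∈ H.verts) :
    G.dist u v + G.dist u w + G.dist v w ≤ 2 * H.edgeSet.ncard := by
  have := hH.dist_le_dist_coe hu hv
  have := hH.dist_le_dist_coe hu hw
  have := hH.dist_le_dist_coe hv hw
  have := hH.coe.dist_add_dist_add_dist_le ⟨u, hu⟩ ⟨v, hv⟩ ⟨w, hw⟩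
  rw [ncard_edgeSet_coe] at this
  omega

end Subgraph

lemma Connected.exists_subgraph_ncard_edgeSet_le (hc : G.Connected) (u v w z : V) :
    ∃ H : G.Subgraph, H.Connected ∧ {u, v, w} ⊆ H.verts ∧
      H.edgeSet.ncard ≤ G.dist z u + G.dist z v + G.dist z w := by
  obtain ⟨pu, hpu⟩ := hc.exists_walk_length_eq_dist z u
  obtain ⟨pv, hpv⟩ := hc.exists_walk_length_eq_dist z v
  obtain ⟨pw, hpw⟩ := hc.exists_walk_length_eq_dist z w
  refine ⟨pu.toSubgraph ⊔ pv.toSubgraph ⊔ pw.toSubgraph, ?_, ?_, ?_⟩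
  · refine Subgraph.connected_sup (H := pu.toSubgraph ⊔ pv.toSubgraph) ?_
      pw.toSubgraph_connected.preconnected
      ⟨z, Or.inl pu.start_mem_verts_toSubgraph, pw.start_mem_verts_toSubgraph⟩
    exact (Subgraph.connected_sup pu.toSubgraph_connected.preconnected
      pv.toSubgraph_connected.preconnected
      ⟨z, pu.start_mem_verts_toSubgraph, pv.start_mem_verts_toSubgraph⟩).preconnected
  · rintro x (rfl | rfl | rfl)
    · exact .inl (.inl pu.end_mem_verts_toSubgraph)
    · exact .inl (.inr pv.end_mem_verts_toSubgraph)
    · exact .inr pw.end_mem_verts_toSubgraph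
  · simp only [Subgraph.edgeSet_sup, Walk.edgeSet_toSubgraph]
    calc (pu.edgeSet ∪ pv.edgeSet ∪ pw.edgeSet).ncard
        ≤ pu.edgeSet.ncard + pv.edgeSet.ncard + pw.edgeSet.ncard :=
          (Set.ncard_union_le _ _).trans (add_le_add_left (Set.ncard_union_le _ _) _)
      _ ≤ G.dist z u + G.dist z v + G.dist z w := by
          rw [← hpu, ← hpv, ← hpw]
          gcongr <;> exact Walk.ncard_edgeSet_le_length _

end SimpleGraph

section Steiner

variable {V : Type*} {G : SimpleGraph V} {S : Set V} {u v w z : V}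

lemma steinerDist_le_ncard_edgeSet {H : G.Subgraph} (hH : H.Connected) (hS : S ⊆ H.verts) :
    steinerDist G S ≤ H.edgeSet.ncard :=
  Nat.sInf_le ⟨H, hH, hS, rfl⟩

lemma exists_subgraph_ncard_edgeSet_eq_steinerDist {H : G.Subgraph} (hH : H.Connected)
    (hS : S ⊆ H.verts) :
    ∃ K : G.Subgraph, K.Connected ∧ S ⊆ K.verts ∧ K.edgeSet.ncard = steinerDist G S :=
  Nat.sInf_mem (s := {n | ∃ K : G.Subgraph, K.Connected ∧ S ⊆ K.verts ∧ K.edgeSet.ncard = n})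
    ⟨_, H, hH, hS, rfl⟩

/-- A median `z` makes the union of geodesics from `z` to `u`, `v`, `w` a Steiner tree. -/
lemma IsMedian.two_mul_steinerDist [Finite V] (hc : G.Connected) (hz : IsMedian G u v w z) :
    2 * steinerDist G {u, v, w} = G.dist u v + G.dist u w + G.dist v w := by
  obtain ⟨huv, huw, hvw⟩ := hz
  obtain ⟨H, hH, hS, hHz⟩ := hc.exists_subgraph_ncard_edgeSet_le u v w z
  have hupper := (steinerDist_le_ncard_edgeSet hH hS).trans hHz
  obtain ⟨K, hK, hSK, hKS⟩ := exists_subgraph_ncard_edgeSet_eq_steinerDist hH hS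
  have hlower := hK.dist_add_dist_add_dist_le (hSK (Set.mem_insert u _))
    (hSK (by simp : v ∈ ({u, v, w} : Set V))) (hSK (by simp : w ∈ ({u, v, w} : Set V)))
  rw [dist_comm (u := u) (v := z)] at huv huw
  rw [dist_comm (u := v) (v := z)] at hvw
  omega

lemma IsModular.four_mul_steinerDist [Finite V] [DecidableEq V] (hG : IsModular G)
    {S : Finset V} (hS : #S = 3) :
    4 * steinerDist G S = ∑ p ∈ S.offDiag, G.dist p.1 p.2 := by
  obtain ⟨u, v, w, huv, huw, hvw, rfl⟩ := card_eq_three.mp hS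
  obtain ⟨z, hz⟩ := hG.2 u v w
  have := hz.two_mul_steinerDist hG.1
  rw [coe_insert, coe_pair, sum_offDiag_triple huv huw hvw]
  dsimp only
  rw [dist_comm (u := v) (v := u), dist_comm (u := w) (v := u), dist_comm (u := w) (v := v)]
  omega

lemma IsModular.four_mul_SW_three [Fintype V] [DecidableEq V] (hG : IsModular G) :
    4 * SW 3 G = (Fintype.card V - 2) * ∑ p ∈ univ.offDiag, G.dist p.1 p.2 := by
  rw [SW, mul_sum, sum_congr rfl fun S hS => hG.four_mul_steinerDist (mem_powersetCard.mp hS).2,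
    sum_powersetCard_sum_offDiag _ (by norm_num), card_univ, Nat.choose_one_right, smul_eq_mul]

end Steiner

/-- For a modular graph `G` with at least three vertices,
`SW₃(G) = ((|V|-2)/2)·W(G)`. -/
theorem steiner_three_wiener_modular
    {V : Type*} [Fintype V] [DecidableEq V] (G : SimpleGraph V)
    (hG : IsModular G) (hV : 3 ≤ Fintype.card V) :
    (SW 3 G : ℝ) = ((Fintype.card V : ℝ) - 2) / 2 * wiener G := by
  have h := congrArg (Nat.cast (R := ℝ)) hG.four_mul_SW_three
  push_cast [Nat.cast_sub (by omega : 2 ≤ Fintype.card V)] at h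
  rw [wiener]
  linarith
end

section
/- Let G be a graph that is both modular and a partial cube, with at least three vertices and Θ-classes E_1, …, E_d. Then SWW_3(G) = ((3|V(G)|−6)/8)·Σ_{i=1}^{d} n_i^0 n_i^1 + ((|V(G)|−2)/4)·Σ_{i<j} ( n_{ij}^{00} n_{ij}^{11} + n_{ij}^{01} n_{ij}^{10} ) + (1/8)·Σ_{i=1}^{d} ( n_i^0 n_i^1 (n_i^1−1) + n_i^1 n_i^0 (n_i^0−1) ) + (1/4)·Σ_{i<j} ( 3 n_{ij}^{00} n_{ij}^{01} n_{ij}^{10} + 3 n_{ij}^{00} n_{ij}^{01} n_{ij}^{11} + 3 n_{ij}^{00} n_{ij}^{10} n_{ij}^{11} + 3 n_{ij}^{01} n_{ij}^{10} n_{ij}^{11} + n_{ij}^{00} n_{ij}^{11}(n_{ij}^{11}−1) + n_{ij}^{01} n_{ij}^{10}(n_{ij}^{10}−1) + n_{ij}^{10} n_{ij}^{01}(n_{ij}^{01}−1) + n_{ij}^{11} n_{ij}^{00}(n_{ij}^{00}−1) ). -/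
open Finset SimpleGraph Polynomial

/-!
A partial cube sits isometrically in a hypercube, and its Θ-classes are exactly the coordinates
that are used, so `d(u, v)` is the number of Θ-cuts `(U_i, U_i')` separating `u` from `v`.
A connected subgraph containing a set `S` must contain an edge of every cut separating `S`, and
an edge lies in only one cut. Conversely, for a median `z` of `u, v, w` the union of geodesics
from `z` has at most `d(z,u) + d(z,v) + d(z,w) = (d(u,v) + d(u,w) + d(v,w)) / 2` edges, which
is the number of cuts separating `{u, v, w}`. So the Steiner distance of a triple counts the
cuts separating it, and `SWW₃` is the number of (triple, cut) incidences plus the number of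
(triple, pair of cuts) incidences; both are binomial sums over the sides and the four quadrants
of two cuts, by inclusion–exclusion.
-/

lemma eq_of_hammingDist_eq_one {ι : Type*} [Fintype ι] {β : ι → Type*} [∀ i, DecidableEq (β i)]
    {x y : ∀ i, β i} (h : hammingDist x y = 1) {i j : ι} (hi : x i ≠ y i) (hj : x j ≠ y j) :
    i = j :=
  card_le_one.1 h.le i (by simpa using hi) j (by simpa using hj)

lemma hammingDist_sub_hammingDist_of_eq_one {ι : Type*} [Fintype ι] {x y : ι → Bool}
    (h : hammingDist x y = 1) {γ : ι} (hγ : x γ ≠ y γ) (z : ι → Bool) :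
    (hammingDist y z : ℤ) - hammingDist x z = if x γ = z γ then 1 else -1 := by
  simp only [hammingDist, card_filter]
  push_cast
  rw [← sum_sub_distrib, sum_eq_single γ]
  · revert hγ; cases x γ <;> cases y γ <;> cases z γ <;> simp
  · intro j _ hj
    have : x j = y j := by_contra fun hne => hj (eq_of_hammingDist_eq_one h hne hγ)
    simp [this]
  · simp

section Hypercube

variable {n : ℕ}

lemma hypercubeGraph_adj_iff {x y : Fin n → Bool} :
    (hypercubeGraph n).Adj x y ↔ hammingDist x y = 1 := by
  rw [hammingDist, ← Fintype.existsUnique_iff_card_one]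
  simp only [hypercubeGraph, fromRel_adj]
  simp_rw [ne_comm (a := y _), or_self]
  refine ⟨And.right, fun h => ⟨fun hxy => ?_, h⟩⟩
  obtain ⟨i, hi, -⟩ := h
  exact hi (hxy ▸ rfl)

lemma hammingDist_le_length {x y : Fin n → Bool} (p : (hypercubeGraph n).Walk x y) :
    hammingDist x y ≤ p.length := by
  induction p with
  | nil => simp
  | @cons x z y h p ih =>
    have := hammingDist_triangle x z y
    have := hypercubeGraph_adj_iff.1 h
    rw [Walk.length_cons]
    omega

lemma exists_walk_length_eq_hammingDist (x y : Fin n → Bool) :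
    ∃ p : (hypercubeGraph n).Walk x y, p.length = hammingDist x y := by
  induction hk : hammingDist x y generalizing x with
  | zero =>
    obtain rfl := hammingDist_eq_zero.1 hk
    exact ⟨.nil, rfl⟩
  | succ k ih =>
    obtain ⟨i, hi⟩ : ∃ i, x i ≠ y i := by
      by_contra! h
      simp [funext h] at hk
    set x' := Function.update x i (y i)
    have hx' : hammingDist x' y = k := by
      have : ({j | x' j ≠ y j} : Finset _) = ({j | x j ≠ y j} : Finset _).erase i := by
        ext j
        by_cases hj : j = i <;> simp [x', hj]
      rw [hammingDist, this, card_erase_of_mem (by simpa using hi), ← hammingDist, hk]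
      rfl
    have hadj : (hypercubeGraph n).Adj x x' := by
      rw [hypercubeGraph_adj_iff, hammingDist, card_eq_one]
      refine ⟨i, ?_⟩
      ext j
      by_cases hj : j = i <;> simp [x', hj, hi]
    obtain ⟨p, hp⟩ := ih x' hx'
    exact ⟨.cons hadj p, by simp [hp]⟩

lemma hypercubeGraph_dist (x y : Fin n → Bool) :
    (hypercubeGraph n).dist x y = hammingDist x y := by
  obtain ⟨p, hp⟩ := exists_walk_length_eq_hammingDist x y
  obtain ⟨q, hq⟩ := Reachable.exists_walk_length_eq_dist ⟨p⟩
  exact le_antisymm (hp ▸ dist_le p) (hq ▸ hammingDist_le_length q)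

end Hypercube

lemma SimpleGraph.Reachable.apply_eq_of_forall_adj {V β : Type*} {H : SimpleGraph V} {g : V → β}
    (hg : ∀ a b, H.Adj a b → g a = g b) {x y : V} (h : H.Reachable x y) : g x = g y := by
  obtain ⟨p⟩ := h
  induction p with
  | nil => rfl
  | cons hadj _ ih => exact (hg _ _ hadj).trans ih

lemma SimpleGraph.ConnectedComponent.exists_supp_eq_fiber {V : Type*} {H : SimpleGraph V}
    {g : V → Bool} (hg : ∀ a b, H.Adj a b → g a = g b) {a b : V} (hab : g a ≠ g b)
    {C C' : H.ConnectedComponent} (hall : ∀ D, D = C ∨ D = C') :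
    ∃ β, C.supp = {x | g x = β} ∧ C'.supp = {x | g x ≠ β} := by
  induction C using ConnectedComponent.ind with | h x₀ =>
  induction C' using ConnectedComponent.ind with | h y₀ =>
  have hcomp : ∀ x, (H.connectedComponentMk x = H.connectedComponentMk x₀ ∧ g x = g x₀) ∨
      (H.connectedComponentMk x = H.connectedComponentMk y₀ ∧ g x = g y₀) := fun x =>
    (hall _).imp (fun h => ⟨h, (ConnectedComponent.exact h).apply_eq_of_forall_adj hg⟩)
      (fun h => ⟨h, (ConnectedComponent.exact h).apply_eq_of_forall_adj hg⟩)
  have hne : g x₀ ≠ g y₀ := fun h => hab <| by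
    rcases hcomp a with ⟨-, ha⟩ | ⟨-, ha⟩ <;> rcases hcomp b with ⟨-, hb⟩ | ⟨-, hb⟩ <;>
      simp only [ha, hb, h]
  have hCC' : H.connectedComponentMk x₀ ≠ H.connectedComponentMk y₀ := fun h =>
    hne ((ConnectedComponent.exact h).apply_eq_of_forall_adj hg)
  refine ⟨g x₀, ?_, ?_⟩ <;> ext x <;>
    simp only [ConnectedComponent.mem_supp_iff, Set.mem_ofPred_eq] <;> rcases hcomp x with ⟨h1, h2⟩ | ⟨h1, h2⟩ <;> simp [h1, h2, Ne.symm hne, hCC', Ne.symm hCC']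

section Theta

variable {V : Type*} {G : SimpleGraph V} {n : ℕ} {f : V → Fin n → Bool}

lemma theta_mk_iff {a b c d : V} :
    theta G s(a, b) s(c, d) ↔ G.dist a c + G.dist b d ≠ G.dist a d + G.dist b c := by
  refine ⟨fun ⟨u₁, v₁, u₂, v₂, he, hf, hne⟩ => ?_, fun h => ⟨a, b, c, d, rfl, rfl, h⟩⟩
  rw [Sym2.eq_iff] at he hf
  rcases he with ⟨rfl, rfl⟩ | ⟨rfl, rfl⟩ <;> rcases hf with ⟨rfl, rfl⟩ | ⟨rfl, rfl⟩ <;> omega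

lemma theta_mk_iff_of_adj (hf : ∀ u v, hammingDist (f u) (f v) = G.dist u v) {a b c d : V}
    (hcd : G.Adj c d) {γ : Fin n} (hγ : f c γ ≠ f d γ) :
    theta G s(a, b) s(c, d) ↔ f a γ ≠ f b γ := by
  have h1 : hammingDist (f c) (f d) = 1 := by rw [hf, dist_eq_one_iff_adj.2 hcd]
  have ha := hammingDist_sub_hammingDist_of_eq_one h1 hγ (f a)
  have hb := hammingDist_sub_hammingDist_of_eq_one h1 hγ (f b)
  rw [theta_mk_iff, ← hf, ← hf, ← hf, ← hf, hammingDist_comm (f a), hammingDist_comm (f b),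
    hammingDist_comm (f a) (f d), hammingDist_comm (f b) (f c)]
  revert ha hb hγ
  cases f a γ <;> cases f b γ <;> cases f c γ <;> cases f d γ <;> simp <;> omega

end Theta

def Separates {V : Type*} (A s : Finset V) : Prop := ¬ s ⊆ A ∧ ¬ Disjoint s A

instance {V : Type*} [DecidableEq V] (A s : Finset V) : Decidable (Separates A s) :=
  inferInstanceAs (Decidable (¬ _ ∧ ¬ _))

lemma separates_pair_iff {V : Type*} [DecidableEq V] {A : Finset V} {u v : V} :
    Separates A {u, v} ↔ (u ∈ A ↔ v ∉ A) := by
  simp only [Separates, insert_subset_iff, singleton_subset_iff, disjoint_insert_left,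
    disjoint_singleton_left]
  tauto

namespace IsThetaClassSetup

variable {V : Type*} {G : SimpleGraph V} {n : ℕ} {f : V → Fin n → Bool}
  {d : ℕ} {E : Fin d → Set (Sym2 V)} {U U' : Fin d → Set V} {c : Fin d → Fin n}

lemma exists_coord (hf : ∀ u v, hammingDist (f u) (f v) = G.dist u v)
    (hs : IsThetaClassSetup G d E U U') :
    ∃ c : Fin d → Fin n, (∀ i, ∃ a b, f a (c i) ≠ f b (c i)) ∧
      ∀ i a b, s(a, b) ∈ E i ↔ G.Adj a b ∧ f a (c i) ≠ f b (c i) := by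
  have key : ∀ i, ∃ γ, (∃ a b, f a γ ≠ f b γ) ∧
      ∀ a b, s(a, b) ∈ E i ↔ G.Adj a b ∧ f a γ ≠ f b γ := by
    intro i
    obtain ⟨e, he, hEi⟩ := hs.1 i
    induction e using Sym2.ind with | _ x y =>
    have hxy : hammingDist (f x) (f y) = 1 := by rw [hf, dist_eq_one_iff_adj.2 he]
    obtain ⟨γ, hγ⟩ : ∃ γ, f x γ ≠ f y γ := by
      by_contra! h
      simp [funext h] at hxy
    refine ⟨γ, ⟨x, y, hγ⟩, fun a b => ?_⟩
    rw [hEi, Set.mem_ofPred_eq, mem_edgeSet, theta_mk_iff_of_adj hf he hγ]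
  choose c hc using key
  exact ⟨c, fun i => (hc i).1, fun i => (hc i).2⟩

lemma injective_coord (hs : IsThetaClassSetup G d E U U')
    (hmem : ∀ i a b, s(a, b) ∈ E i ↔ G.Adj a b ∧ f a (c i) ≠ f b (c i)) : Function.Injective c := by
  intro i j hij
  apply hs.2.1
  ext e
  induction e using Sym2.ind with | _ a b => rw [hmem, hmem, hij]

lemma dist_eq_card_coord (hs : IsThetaClassSetup G d E U U') (hconn : G.Connected)
    (hf : ∀ u v, hammingDist (f u) (f v) = G.dist u v)
    (hmem : ∀ i a b, s(a, b) ∈ E i ↔ G.Adj a b ∧ f a (c i) ≠ f b (c i)) (u v : V) :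
    G.dist u v = #{i | f u (c i) ≠ f v (c i)} := by
  have hrange : ∀ γ, f u γ ≠ f v γ → γ ∈ Set.range c := by
    intro γ h
    obtain ⟨p⟩ := hconn.preconnected u v
    obtain ⟨e, -, he₁, he₂⟩ := p.exists_boundary_dart {x | f x γ = f u γ} rfl (Ne.symm h)
    obtain ⟨i, hi⟩ := Set.mem_iUnion.1 (hs.2.2.1 ▸ e.adj : s(e.fst, e.snd) ∈ ⋃ i, E i)
    have he : hammingDist (f e.fst) (f e.snd) = 1 := by rw [hf, dist_eq_one_iff_adj.2 e.adj]
    exact ⟨i, eq_of_hammingDist_eq_one he ((hmem i _ _).1 hi).2 (fun h' => he₂ (h'.symm.trans he₁))⟩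
  rw [← hf, hammingDist, ← card_image_of_injective _ (hs.injective_coord hmem)]
  congr 1
  ext γ
  simp only [mem_image, mem_filter_univ]
  exact ⟨fun h => (hrange γ h).imp fun i (hi : c i = γ) => ⟨hi ▸ h, hi⟩, fun ⟨i, hi, hγ⟩ => hγ ▸ hi⟩

lemma exists_sides_eq_fiber (hs : IsThetaClassSetup G d E U U')
    (hmem : ∀ i a b, s(a, b) ∈ E i ↔ G.Adj a b ∧ f a (c i) ≠ f b (c i))
    (hcut : ∀ i, ∃ a b, f a (c i) ≠ f b (c i)) (i : Fin d) :
    ∃ β, U i = {x | f x (c i) = β} ∧ U' i = {x | f x (c i) ≠ β} := by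
  obtain ⟨C, C', -, hU, hU', hall⟩ := hs.2.2.2 i
  obtain ⟨a, b, hab⟩ := hcut i
  rw [hU, hU']
  refine ConnectedComponent.exists_supp_eq_fiber (fun x y hxy => ?_) hab hall
  rw [deleteEdges_adj] at hxy
  by_contra hne
  exact hxy.2 ((hmem i x y).2 ⟨hxy.1, hne⟩)

theorem exists_finset_sides [Fintype V] [DecidableEq V] (hPC : IsPartialCube G)
    (hs : IsThetaClassSetup G d E U U') :
    ∃ A : Fin d → Finset V, (∀ i, U i = A i ∧ U' i = ↑(A i)ᶜ) ∧
      ∀ u v, G.dist u v = #{i | Separates (A i) {u, v}} := by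
  obtain ⟨hconn, n, f, hf⟩ := hPC
  simp only [hypercubeGraph_dist] at hf
  obtain ⟨c, hcut, hmem⟩ := hs.exists_coord hf
  choose β hβ using hs.exists_sides_eq_fiber hmem hcut
  refine ⟨fun i => {x | f x (c i) = β i}, fun i => ?_, fun u v => ?_⟩
  · rw [(hβ i).1, (hβ i).2]
    constructor <;> ext x <;> simp
  · rw [hs.dist_eq_card_coord hconn hf hmem]
    congr 1
    ext i
    simp only [mem_filter_univ, separates_pair_iff]
    cases f u (c i) <;> cases f v (c i) <;> cases β i <;> simp

end IsThetaClassSetup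

section SteinerDistance

variable {V : Type*} {G : SimpleGraph V}

lemma steinerDist_le {S : Set V} {H : G.Subgraph} (hH : H.Connected) (hS : S ⊆ H.verts) :
    steinerDist G S ≤ H.edgeSet.ncard :=
  Nat.sInf_le ⟨H, hH, hS, rfl⟩

lemma le_steinerDist {S : Set V} {m : ℕ} (hne : ∃ H : G.Subgraph, H.Connected ∧ S ⊆ H.verts)
    (h : ∀ H : G.Subgraph, H.Connected → S ⊆ H.verts → m ≤ H.edgeSet.ncard) :
    m ≤ steinerDist G S := by
  obtain ⟨H, hH, hS⟩ := hne
  exact le_csInf ⟨_, H, hH, hS, rfl⟩ fun _ ⟨H, hH, hS, hm⟩ => hm ▸ h H hH hS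

lemma SimpleGraph.Walk.ncard_edgeSet_toSubgraph_le {u v : V} (p : G.Walk u v) :
    p.toSubgraph.edgeSet.ncard ≤ p.length := by
  classical
  rw [edgeSet_toSubgraph, Walk.edgeSet, ← List.coe_toFinset, Set.ncard_coe_finset,
    ← p.length_edges]
  exact List.toFinset_card_le _

lemma SimpleGraph.Connected.exists_connected_subgraph_ncard_edgeSet_le (hconn : G.Connected)
    (u v w z : V) :
    ∃ H : G.Subgraph, H.Connected ∧ {u, v, w} ⊆ H.verts ∧
      H.edgeSet.ncard ≤ G.dist z u + G.dist z v + G.dist z w := by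
  obtain ⟨p, hp⟩ := hconn.exists_walk_length_eq_dist z u
  obtain ⟨q, hq⟩ := hconn.exists_walk_length_eq_dist z v
  obtain ⟨r, hr⟩ := hconn.exists_walk_length_eq_dist z w
  refine ⟨p.toSubgraph ⊔ q.toSubgraph ⊔ r.toSubgraph, ?_, ?_, ?_⟩
  · refine Subgraph.connected_sup (Subgraph.connected_sup p.toSubgraph_connected.preconnected
      q.toSubgraph_connected.preconnected ?_).preconnected r.toSubgraph_connected.preconnected ?_
    · exact ⟨z, p.start_mem_verts_toSubgraph, q.start_mem_verts_toSubgraph⟩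
    · exact ⟨z, .inl p.start_mem_verts_toSubgraph, r.start_mem_verts_toSubgraph⟩
  · simp [Set.insert_subset_iff]
  · simp only [Subgraph.edgeSet_sup]
    have := Set.ncard_union_le (p.toSubgraph.edgeSet ∪ q.toSubgraph.edgeSet) r.toSubgraph.edgeSet
    have := Set.ncard_union_le p.toSubgraph.edgeSet q.toSubgraph.edgeSet
    have := p.ncard_edgeSet_toSubgraph_le
    have := q.ncard_edgeSet_toSubgraph_le
    have := r.ncard_edgeSet_toSubgraph_le
    omega

variable [DecidableEq V] {ι : Type*} [Fintype ι] {A : ι → Finset V}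

lemma two_mul_card_separates_triple (A : ι → Finset V) (u v w : V) :
    2 * #{i | Separates (A i) {u, v, w}} =
      #{i | Separates (A i) {u, v}} + #{i | Separates (A i) {u, w}} +
        #{i | Separates (A i) {v, w}} := by
  simp only [card_filter, mul_sum, ← sum_add_distrib]
  refine sum_congr rfl fun i _ => ?_
  simp only [Separates, insert_subset_iff, singleton_subset_iff, disjoint_insert_left,
    disjoint_singleton_left]
  by_cases hu : u ∈ A i <;> by_cases hv : v ∈ A i <;> by_cases hw : w ∈ A i <;> simp [hu, hv, hw]

lemma eq_of_separates_of_adj (hA : ∀ u v, G.dist u v = #{i | Separates (A i) {u, v}})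
    {a b : V} (hab : G.Adj a b) {i j : ι} (hi : Separates (A i) {a, b})
    (hj : Separates (A j) {a, b}) : i = j :=
  card_le_one.1 (by rw [← hA, dist_eq_one_iff_adj.2 hab]) i (by simpa) j (by simpa)

lemma card_separates_le_ncard_edgeSet [Finite V]
    (hA : ∀ u v, G.dist u v = #{i | Separates (A i) {u, v}}) {s : Finset V} {H : G.Subgraph}
    (hH : H.Connected) (hs : ↑s ⊆ H.verts) :
    #{i | Separates (A i) s} ≤ H.edgeSet.ncard := by
  have hcross : ∀ i, Separates (A i) s → ∃ a b, H.Adj a b ∧ Separates (A i) {a, b} := by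
    rintro i ⟨hsub, hdisj⟩
    obtain ⟨y, hys, hy⟩ := not_subset.1 hsub
    obtain ⟨x, hxs, hx⟩ := not_disjoint_iff.1 hdisj
    obtain ⟨e, -, he₁, he₂⟩ := (hH.coe.preconnected ⟨x, hs hxs⟩ ⟨y, hs hys⟩).some
      |>.exists_boundary_dart {z : H.verts | z.1 ∈ A i} hx hy
    exact ⟨_, _, e.adj, separates_pair_iff.2 (iff_of_true he₁ he₂)⟩
  have : Nonempty V := ⟨hH.nonempty.some⟩
  choose! a b hab using hcross
  rw [← Set.ncard_coe_finset]
  refine Set.ncard_le_ncard_of_injOn (fun i => s(a i, b i))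
    (fun i hi => (hab i (by simpa using hi)).1) fun i hi j hj hij => ?_
  simp only [mem_coe, mem_filter_univ] at hi hj
  have hj' := (hab j hj).2
  rcases Sym2.eq_iff.1 hij with ⟨h₁, h₂⟩ | ⟨h₁, h₂⟩ <;> rw [← h₁, ← h₂] at hj'
  · exact eq_of_separates_of_adj hA (hab i hi).1.adj_sub (hab i hi).2 hj'
  · exact eq_of_separates_of_adj hA (hab i hi).1.adj_sub (hab i hi).2 (pair_comm (b i) (a i) ▸ hj')

theorem IsModular.steinerDist_triple [Finite V] (hMod : IsModular G)
    (hA : ∀ u v, G.dist u v = #{i | Separates (A i) {u, v}}) (u v w : V) :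
    steinerDist G ↑({u, v, w} : Finset V) = #{i | Separates (A i) {u, v, w}} := by
  obtain ⟨z, hzuv, hzuw, hzvw⟩ := hMod.2 u v w
  obtain ⟨H, hH, hS, hHe⟩ := hMod.1.exists_connected_subgraph_ncard_edgeSet_le u v w z
  have hsum : G.dist z u + G.dist z v + G.dist z w = #{i | Separates (A i) {u, v, w}} := by
    have := two_mul_card_separates_triple A u v w
    rw [← hA, ← hA, ← hA, dist_comm (u := u), dist_comm (u := v)] at *
    omega
  rw [coe_insert, coe_pair]
  refine le_antisymm ((steinerDist_le hH hS).trans (hsum ▸ hHe)) (le_steinerDist ⟨H, hH, hS⟩ ?_)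
  intro K hK hKS
  exact card_separates_le_ncard_edgeSet hA hK (by simpa using hKS)

end SteinerDistance

section Counting

variable {V : Type*} [DecidableEq V]

lemma card_filter_separates_add_subset_add_disjoint (A : Finset V) (P : Finset (Finset V))
    (hP : ∀ s ∈ P, s.Nonempty) :
    #{s ∈ P | Separates A s} + #{s ∈ P | s ⊆ A} + #{s ∈ P | Disjoint s A} = #P := by
  rw [card_filter, card_filter, card_filter, card_eq_sum_ones, ← sum_add_distrib,
    ← sum_add_distrib]
  refine sum_congr rfl fun s hs => ?_
  by_cases hsub : s ⊆ A
  · have hdisj : ¬ Disjoint s A := fun h =>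
      (hP s hs).ne_empty ((disjoint_self_iff_empty s).1 (h.mono_right hsub))
    simp [Separates, hsub, hdisj]
  · by_cases hdisj : Disjoint s A <;> simp [Separates, hsub, hdisj]

lemma card_filter_separates_powersetCard (A W : Finset V) {k : ℕ} (hk : 0 < k) :
    #{s ∈ powersetCard k W | Separates A s} + (#(W ∩ A)).choose k + (#(W \ A)).choose k =
      (#W).choose k := by
  have hsub : {s ∈ powersetCard k W | s ⊆ A} = powersetCard k (W ∩ A) := by
    ext s
    simp only [mem_filter, mem_powersetCard, subset_inter_iff]
    tauto
  have hdisj : {s ∈ powersetCard k W | Disjoint s A} = powersetCard k (W \ A) := by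
    ext s
    simp only [mem_filter, mem_powersetCard, subset_sdiff]
    tauto
  rw [← card_powersetCard, ← card_powersetCard, ← card_powersetCard, ← hsub, ← hdisj]
  exact card_filter_separates_add_subset_add_disjoint A _ fun s hs =>
    card_pos.1 ((mem_powersetCard.1 hs).2 ▸ hk)

variable [Fintype V]

lemma card_filter_separates_separates_powersetCard (A B : Finset V) {k : ℕ} (hk : 0 < k) :
    #{s ∈ powersetCard k univ | Separates A s ∧ Separates B s} + (#A).choose k +
        (#Aᶜ).choose k + (#B).choose k + (#Bᶜ).choose k =
      (Fintype.card V).choose k + (#(A ∩ B)).choose k + (#(A ∩ Bᶜ)).choose k +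
        (#(Aᶜ ∩ B)).choose k + (#(Aᶜ ∩ Bᶜ)).choose k := by
  set P := {s ∈ powersetCard k (univ : Finset V) | Separates A s}
  have hsplit := card_filter_separates_add_subset_add_disjoint B P fun s hs =>
    card_pos.1 ((mem_powersetCard.1 (mem_filter.1 hs).1).2 ▸ hk)
  have hsub : {s ∈ P | s ⊆ B} = {s ∈ powersetCard k B | Separates A s} := by
    ext s
    simp only [P, mem_filter, mem_powersetCard, subset_univ]
    tauto
  have hdisj : {s ∈ P | Disjoint s B} = {s ∈ powersetCard k Bᶜ | Separates A s} := by
    ext s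
    simp only [P, mem_filter, mem_powersetCard, subset_univ, subset_compl_iff_disjoint_right]
    tauto
  have hboth : {s ∈ P | Separates B s} =
      {s ∈ powersetCard k (univ : Finset V) | Separates A s ∧ Separates B s} :=
    filter_filter _ _ _
  have hW : #P + (#A).choose k + (#Aᶜ).choose k = (Fintype.card V).choose k := by
    simpa [compl_eq_univ_sdiff] using card_filter_separates_powersetCard A univ hk
  have hWB := card_filter_separates_powersetCard A B hk
  have hWB' := card_filter_separates_powersetCard A Bᶜ hk
  rw [hsub, hdisj, hboth] at hsplit
  simp only [sdiff_eq_inter_compl] at hWB hWB'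
  rw [inter_comm B, inter_comm B, inter_comm Bᶜ, inter_comm Bᶜ] at *
  omega

lemma cast_choose_three (m : ℕ) : (m.choose 3 : ℝ) = m * (m - 1) * (m - 2) / 6 := by
  simp [Nat.cast_choose_eq_descPochhammer_div, descPochhammer_succ_right, Nat.factorial]

lemma card_filter_separates_eq (A : Finset V) :
    (#{s ∈ powersetCard 3 univ | Separates A s} : ℝ) =
      (3 * (Fintype.card V : ℝ) - 6) / 8 * (#A * #Aᶜ) +
        1 / 8 * (#A * #Aᶜ * (#Aᶜ - 1) + #Aᶜ * #A * (#A - 1)) := by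
  have h := card_filter_separates_powersetCard A (univ : Finset V) three_pos
  rw [univ_inter, ← compl_eq_univ_sdiff, card_univ, ← card_add_card_compl A] at h
  have h' : (_ : ℝ) = _ := congrArg (Nat.cast : ℕ → ℝ) h
  push_cast [cast_choose_three, card_univ, ← card_add_card_compl A] at h' ⊢
  linear_combination h'

lemma card_filter_separates_separates_eq (A B : Finset V) :
    (#{s ∈ powersetCard 3 univ | Separates A s ∧ Separates B s} : ℝ) =
      ((Fintype.card V : ℝ) - 2) / 4 * (#(A ∩ B) * #(Aᶜ ∩ Bᶜ) + #(A ∩ Bᶜ) * #(Aᶜ ∩ B)) +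
        1 / 4 * (3 * #(A ∩ B) * #(A ∩ Bᶜ) * #(Aᶜ ∩ B) + 3 * #(A ∩ B) * #(A ∩ Bᶜ) * #(Aᶜ ∩ Bᶜ)
          + 3 * #(A ∩ B) * #(Aᶜ ∩ B) * #(Aᶜ ∩ Bᶜ) + 3 * #(A ∩ Bᶜ) * #(Aᶜ ∩ B) * #(Aᶜ ∩ Bᶜ)
          + #(A ∩ B) * #(Aᶜ ∩ Bᶜ) * (#(Aᶜ ∩ Bᶜ) - 1) + #(A ∩ Bᶜ) * #(Aᶜ ∩ B) * (#(Aᶜ ∩ B) - 1)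
          + #(Aᶜ ∩ B) * #(A ∩ Bᶜ) * (#(A ∩ Bᶜ) - 1) + #(Aᶜ ∩ Bᶜ) * #(A ∩ B) * (#(A ∩ B) - 1)) := by
  have h := card_filter_separates_separates_powersetCard A B three_pos
  have hsplit : ∀ X Y : Finset V, #X = #(X ∩ Y) + #(X ∩ Yᶜ) := fun X Y => by
    rw [← sdiff_eq_inter_compl, card_inter_add_card_sdiff]
  have hN : Fintype.card V = #(A ∩ B) + #(A ∩ Bᶜ) + (#(Aᶜ ∩ B) + #(Aᶜ ∩ Bᶜ)) := by
    rw [← hsplit, ← hsplit, card_add_card_compl]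
  rw [hN, hsplit A B, hsplit Aᶜ B, hsplit B A, hsplit Bᶜ A, inter_comm B, inter_comm B,
    inter_comm Bᶜ, inter_comm Bᶜ] at h
  have h' : (_ : ℝ) = _ := congrArg (Nat.cast : ℕ → ℝ) h
  push_cast [cast_choose_three, hN] at h' ⊢
  linear_combination h'

end Counting

lemma sum_sum_eq_sum_add_two_mul_sum_lt {ι R : Type*} [Fintype ι] [LinearOrder ι] [CommSemiring R]
    (F : ι → ι → R) (hF : ∀ i j, F i j = F j i) :
    ∑ i, ∑ j, F i j = ∑ i, F i i + 2 * ∑ i, ∑ j with i < j, F i j := by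
  have hsplit : ∀ i j, F i j = (if j < i then F i j else 0) + (if i = j then F i j else 0) +
      (if i < j then F i j else 0) := by
    intro i j
    rcases lt_trichotomy i j with h | rfl | h
    · simp [h, h.not_gt, h.ne]
    · simp
    · simp [h, h.not_gt, h.ne']
  have hlower : ∑ i, ∑ j, (if j < i then F i j else 0) = ∑ i, ∑ j with i < j, F i j := by
    rw [sum_comm]
    exact sum_congr rfl fun i _ => by rw [sum_filter]; exact sum_congr rfl fun j _ => by rw [hF]
  calc ∑ i, ∑ j, F i j
      = ∑ i, ∑ j, (if j < i then F i j else 0) + ∑ i, ∑ j, (if i = j then F i j else 0) +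
          ∑ i, ∑ j, (if i < j then F i j else 0) := by
        simp only [← sum_add_distrib, ← hsplit]
    _ = _ := by
        rw [hlower]
        simp only [sum_ite_eq, mem_univ, if_true, ← sum_filter]
        ring

section HyperWiener

variable {V : Type*} [Fintype V] [DecidableEq V] {G : SimpleGraph V}

lemma SWW_three_eq_sum_card_separates {ι : Type*} [Fintype ι] [LinearOrder ι] (A : ι → Finset V)
    (h : ∀ s ∈ powersetCard 3 univ, steinerDist G ↑s = #{i | Separates (A i) s}) :
    SWW 3 G = ∑ i, (#{s ∈ powersetCard 3 univ | Separates (A i) s} : ℝ) +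
      ∑ i, ∑ j with i < j,
        (#{s ∈ powersetCard 3 univ | Separates (A i) s ∧ Separates (A j) s} : ℝ) := by
  have hd : ∀ s ∈ powersetCard 3 univ,
      (steinerDist G ↑s : ℝ) = ∑ i, if Separates (A i) s then 1 else 0 := by
    intro s hs
    rw [h s hs, card_filter]
    push_cast
    rfl
  have hsq : ∀ s ∈ powersetCard 3 univ, (steinerDist G ↑s : ℝ) ^ 2 =
      ∑ i, ∑ j, if Separates (A i) s ∧ Separates (A j) s then 1 else 0 := by
    intro s hs
    simp only [hd s hs, sq, sum_mul_sum, ite_zero_mul_ite_zero, mul_one]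
  have hsum : ∑ s ∈ powersetCard 3 (univ : Finset V), (steinerDist G ↑s : ℝ) =
      ∑ i, (#{s ∈ powersetCard 3 univ | Separates (A i) s} : ℝ) := by
    rw [sum_congr rfl hd, sum_comm]
    simp only [sum_boole]
  have hsum_sq : ∑ s ∈ powersetCard 3 (univ : Finset V), (steinerDist G ↑s : ℝ) ^ 2 =
      ∑ i, ∑ j, (#{s ∈ powersetCard 3 univ | Separates (A i) s ∧ Separates (A j) s} : ℝ) := by
    rw [sum_congr rfl hsq, sum_comm, sum_congr rfl fun i _ => sum_comm]
    simp only [sum_boole]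
  have hpairs := sum_sum_eq_sum_add_two_mul_sum_lt
    (fun i j => (#{s ∈ powersetCard 3 univ | Separates (A i) s ∧ Separates (A j) s} : ℝ))
    fun i j => by simp only [and_comm]
  simp only [and_self] at hpairs
  rw [SWW, hsum, hsum_sq, hpairs]
  ring

end HyperWiener

theorem steiner_three_hyper_wiener_cut_method_general
    {V : Type*} [Fintype V] [DecidableEq V] (G : SimpleGraph V)
    (hMod : IsModular G) (hPC : IsPartialCube G)
    (d : ℕ) (E : Fin d → Set (Sym2 V)) (U U' : Fin d → Set V)
    (hsetup : IsThetaClassSetup G d E U U') :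
    SWW 3 G = (3 * (Fintype.card V : ℝ) - 6) / 8
        * ∑ i : Fin d, ((U i).ncard : ℝ) * ((U' i).ncard : ℝ)
      + ((Fintype.card V : ℝ) - 2) / 4
        * ∑ i : Fin d, ∑ j ∈ Finset.univ.filter (fun j => i < j),
            (((U i ∩ U j).ncard : ℝ) * ((U' i ∩ U' j).ncard : ℝ)
              + ((U i ∩ U' j).ncard : ℝ) * ((U' i ∩ U j).ncard : ℝ))
      + 1 / 8 * ∑ i : Fin d,
          (((U i).ncard : ℝ) * ((U' i).ncard : ℝ) * (((U' i).ncard : ℝ) - 1)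
            + ((U' i).ncard : ℝ) * ((U i).ncard : ℝ) * (((U i).ncard : ℝ) - 1))
      + 1 / 4 * ∑ i : Fin d, ∑ j ∈ Finset.univ.filter (fun j => i < j),
          (3 * ((U i ∩ U j).ncard : ℝ) * ((U i ∩ U' j).ncard : ℝ) * ((U' i ∩ U j).ncard : ℝ)
            + 3 * ((U i ∩ U j).ncard : ℝ) * ((U i ∩ U' j).ncard : ℝ) * ((U' i ∩ U' j).ncard : ℝ)
            + 3 * ((U i ∩ U j).ncard : ℝ) * ((U' i ∩ U j).ncard : ℝ) * ((U' i ∩ U' j).ncard : ℝ)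
            + 3 * ((U i ∩ U' j).ncard : ℝ) * ((U' i ∩ U j).ncard : ℝ) * ((U' i ∩ U' j).ncard : ℝ)
            + ((U i ∩ U j).ncard : ℝ) * ((U' i ∩ U' j).ncard : ℝ) * (((U' i ∩ U' j).ncard : ℝ) - 1)
            + ((U i ∩ U' j).ncard : ℝ) * ((U' i ∩ U j).ncard : ℝ) * (((U' i ∩ U j).ncard : ℝ) - 1)
            + ((U' i ∩ U j).ncard : ℝ) * ((U i ∩ U' j).ncard : ℝ) * (((U i ∩ U' j).ncard : ℝ) - 1)
            + ((U' i ∩ U' j).ncard : ℝ) * ((U i ∩ U j).ncard : ℝ) * (((U i ∩ U j).ncard : ℝ) - 1)) := by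
  obtain ⟨A, hUA, hdist⟩ := hsetup.exists_finset_sides hPC
  obtain rfl : U = fun i => ↑(A i) := funext fun i => (hUA i).1
  obtain rfl : U' = fun i => ↑(A i)ᶜ := funext fun i => (hUA i).2
  have hsteiner : ∀ s ∈ powersetCard 3 univ, steinerDist G ↑s = #{i | Separates (A i) s} := by
    intro s hs
    obtain ⟨u, v, w, -, -, -, rfl⟩ := card_eq_three.1 (mem_powersetCard.1 hs).2
    exact hMod.steinerDist_triple hdist u v w
  simp only [← coe_inter, Set.ncard_coe_finset]
  rw [SWW_three_eq_sum_card_separates A hsteiner]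
  conv_lhs => simp only [card_filter_separates_eq, card_filter_separates_separates_eq,
    sum_add_distrib]
  simp only [mul_sum]
  ring

/-- Cut method for the Steiner 3-hyper-Wiener index of a graph that is both modular
and a partial cube, with at least three vertices. -/
theorem steiner_three_hyper_wiener_cut_method
    {V : Type*} [Fintype V] [DecidableEq V] (G : SimpleGraph V)
    (hMod : IsModular G) (hPC : IsPartialCube G) (hV : 3 ≤ Fintype.card V)
    (d : ℕ) (E : Fin d → Set (Sym2 V)) (U U' : Fin d → Set V)
    (hsetup : IsThetaClassSetup G d E U U') :
    SWW 3 G = (3 * (Fintype.card V : ℝ) - 6) / 8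
        * ∑ i : Fin d, ((U i).ncard : ℝ) * ((U' i).ncard : ℝ)
      + ((Fintype.card V : ℝ) - 2) / 4
        * ∑ i : Fin d, ∑ j ∈ Finset.univ.filter (fun j => i < j),
            (((U i ∩ U j).ncard : ℝ) * ((U' i ∩ U' j).ncard : ℝ)
              + ((U i ∩ U' j).ncard : ℝ) * ((U' i ∩ U j).ncard : ℝ))
      + 1 / 8 * ∑ i : Fin d,
          (((U i).ncard : ℝ) * ((U' i).ncard : ℝ) * (((U' i).ncard : ℝ) - 1)
            + ((U' i).ncard : ℝ) * ((U i).ncard : ℝ) * (((U i).ncard : ℝ) - 1))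
      + 1 / 4 * ∑ i : Fin d, ∑ j ∈ Finset.univ.filter (fun j => i < j),
          (3 * ((U i ∩ U j).ncard : ℝ) * ((U i ∩ U' j).ncard : ℝ) * ((U' i ∩ U j).ncard : ℝ)
            + 3 * ((U i ∩ U j).ncard : ℝ) * ((U i ∩ U' j).ncard : ℝ) * ((U' i ∩ U' j).ncard : ℝ)
            + 3 * ((U i ∩ U j).ncard : ℝ) * ((U' i ∩ U j).ncard : ℝ) * ((U' i ∩ U' j).ncard : ℝ)
            + 3 * ((U i ∩ U' j).ncard : ℝ) * ((U' i ∩ U j).ncard : ℝ) * ((U' i ∩ U' j).ncard : ℝ)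
            + ((U i ∩ U j).ncard : ℝ) * ((U' i ∩ U' j).ncard : ℝ) * (((U' i ∩ U' j).ncard : ℝ) - 1)
            + ((U i ∩ U' j).ncard : ℝ) * ((U' i ∩ U j).ncard : ℝ) * (((U' i ∩ U j).ncard : ℝ) - 1)
            + ((U' i ∩ U j).ncard : ℝ) * ((U i ∩ U' j).ncard : ℝ) * (((U i ∩ U' j).ncard : ℝ) - 1)
            + ((U' i ∩ U' j).ncard : ℝ) * ((U i ∩ U j).ncard : ℝ) * (((U i ∩ U j).ncard : ℝ) - 1)) :=
  steiner_three_hyper_wiener_cut_method_general G hMod hPC d E U U' hsetup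
end
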